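/- arXiv:2409.19797 — 3 statements merged into one kernel-verified Lean document; each statement's English description precedes it below -/
import Mathlib

section
/- For every k ∈ {7, 16, 20, 22} and every connected simple graph G on vertex set {1,…,n} with n ≥ 3, the dynamical Lie algebras of G and of the complete graph coincide: 𝔞_k^G = 𝔞_k^{K_n} (i.e., G ∼_k K_n). -/
open Matrix DirectSum

attribute [local instance 100] LieRing.ofAssociativeRing

noncomputable section

/-- The identity Pauli matrix `I`. -/
def PauliI : Matrix (Fin 2) (Fin 2) ℂ := 1

/-- The Pauli matrix `X`. -/
def PauliX : Matrix (Fin 2) (Fin 2) ℂ := !![0, 1; 1, 0]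

/-- The Pauli matrix `Y`. -/
def PauliY : Matrix (Fin 2) (Fin 2) ℂ := !![0, -Complex.I; Complex.I, 0]

/-- The Pauli matrix `Z`. -/
def PauliZ : Matrix (Fin 2) (Fin 2) ℂ := !![1, 0; 0, -1]

/-- The `n`-fold Kronecker product of the 2×2 matrices `A 0, …, A (n-1)`, realized as a
matrix indexed by `Fin n → Fin 2` (a type of cardinality `2^n`). -/
def pauliString {n : ℕ} (A : Fin n → Matrix (Fin 2) (Fin 2) ℂ) :
    Matrix (Fin n → Fin 2) (Fin n → Fin 2) ℂ :=
  Matrix.of fun x y => ∏ k, A k (x k) (y k)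

/-- The Pauli string `A_i B_j` with `A` at site `i`, `B` at site `j`, and identity elsewhere. -/
def twoLocal {n : ℕ} (A B : Matrix (Fin 2) (Fin 2) ℂ) (i j : Fin n) :
    Matrix (Fin n → Fin 2) (Fin n → Fin 2) ℂ :=
  pauliString (fun k => if k = i then A else if k = j then B else PauliI)

/-- The Pauli string `A_i` with `A` at site `i` and identity elsewhere. -/
def oneLocal {n : ℕ} (A : Matrix (Fin 2) (Fin 2) ℂ) (i : Fin n) :
    Matrix (Fin n → Fin 2) (Fin n → Fin 2) ℂ :=
  pauliString (fun k => if k = i then A else PauliI)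

/-- The generating sets `𝒜_k` (a pair `(a, b)` stands for `a ⊗ b`). -/
def genSet : ℕ → Set (Matrix (Fin 2) (Fin 2) ℂ × Matrix (Fin 2) (Fin 2) ℂ)
  | 2 => {(PauliX, PauliY), (PauliY, PauliX)}
  | 4 => {(PauliX, PauliX), (PauliY, PauliY)}
  | 6 => {(PauliX, PauliX), (PauliY, PauliZ), (PauliZ, PauliY)}
  | 7 => {(PauliX, PauliX), (PauliY, PauliY), (PauliZ, PauliZ)}
  | 14 => {(PauliX, PauliX), (PauliY, PauliY), (PauliX, PauliY), (PauliY, PauliX)}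
  | 16 => {(PauliX, PauliY), (PauliY, PauliX), (PauliY, PauliZ), (PauliZ, PauliY)}
  | 20 => {(PauliX, PauliX), (PauliY, PauliY), (PauliY, PauliZ), (PauliZ, PauliY)}
  | 22 => {(PauliX, PauliX), (PauliX, PauliY), (PauliY, PauliX), (PauliX, PauliZ), (PauliZ, PauliX)}
  | _ => ∅

/-- The dynamical Lie algebra `𝔞_k^G`: the smallest real Lie subalgebra of the `2^n × 2^n`
complex matrices containing `i·(a_i · b_j)` for every edge `{i, j}` of `G` and every pair
`(a, b)` with `a ⊗ b ∈ 𝒜_k`. -/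
def dla (k : ℕ) {n : ℕ} (G : SimpleGraph (Fin n)) :
    LieSubalgebra ℝ (Matrix (Fin n → Fin 2) (Fin n → Fin 2) ℂ) :=
  LieSubalgebra.lieSpan ℝ _
    {M | ∃ i j : Fin n, G.Adj i j ∧ ∃ p ∈ genSet k, M = Complex.I • twoLocal p.1 p.2 i j}

/-!
Suppose every generator of `𝒜_k` sits on the two edges `{i, j}` and `{j, l}` of a path
`i - j - l`. A double commutator `⁅⁅a_i b_j, c_j d_l⁆, e_j d'_l⁆` with `⁅b, c⁆ ∝ e` and `e² = I`
clears the middle site and leaves `a_i ⁅d, d'⁆_l`. For each of the four generating sets the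
generators can be chosen so that every element of `𝒜_k` on `{i, l}` arises this way, up to a
nonzero real factor; the one exception, `X_i X_l` for `k = 22`, comes from a similar bracket
that starts from the newly obtained `X_i Y_l` and clears `j` while keeping `l`. Every `𝒜_k` is
closed under swapping the tensor factors, so this transitivity propagates the generators along
walks, and a connected graph generates those of `K_n`.
-/

local notation "M₂" => Matrix (Fin 2) (Fin 2) ℂ

open Complex (I)

lemma LieSubalgebra.ofReal_smul_mem_iff {L : Type*} [LieRing L] [LieAlgebra ℝ L] [Module ℂ L]
    [IsScalarTower ℝ ℂ L] (K : LieSubalgebra ℝ L) {r : ℝ} (hr : r ≠ 0) {x : L} :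
    (r : ℂ) • x ∈ K ↔ x ∈ K := by
  rw [← Complex.coe_algebraMap, algebraMap_smul]
  exact K.toSubmodule.smul_mem_iff hr

lemma SimpleGraph.Reachable.rel_of_ne {V : Type*} {G : SimpleGraph V} {R : V → V → Prop}
    (hadj : ∀ ⦃a b⦄, G.Adj a b → R a b)
    (htrans : ∀ ⦃a b c⦄, a ≠ b → b ≠ c → a ≠ c → R a b → R b c → R a c)
    {u v : V} (h : G.Reachable u v) (huv : u ≠ v) : R u v := by
  obtain ⟨w⟩ := h
  induction w with
  | nil => exact absurd rfl huv
  | @cons a b c hab _ ih =>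
    by_cases hbc : b = c
    · exact hbc ▸ hadj hab
    · exact htrans hab.ne hbc huv (hadj hab) (ih hbc)

@[simp] lemma PauliI_mul (A : M₂) : PauliI * A = A := one_mul A

@[simp] lemma mul_PauliI (A : M₂) : A * PauliI = A := mul_one A

lemma PauliX_mul_self : PauliX * PauliX = PauliI := by
  ext a b; fin_cases a <;> fin_cases b <;> simp [PauliI, PauliX, Matrix.mul_apply]

lemma PauliY_mul_self : PauliY * PauliY = PauliI := by
  ext a b; fin_cases a <;> fin_cases b <;> simp [PauliI, PauliY, Matrix.mul_apply]

lemma PauliZ_mul_self : PauliZ * PauliZ = PauliI := by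
  ext a b; fin_cases a <;> fin_cases b <;> simp [PauliI, PauliZ, Matrix.mul_apply]

lemma lie_PauliX_PauliY : ⁅PauliX, PauliY⁆ = (2 * I) • PauliZ := by
  ext a b; fin_cases a <;> fin_cases b <;>
    simp [Ring.lie_def, PauliX, PauliY, PauliZ] <;> ring

lemma lie_PauliY_PauliZ : ⁅PauliY, PauliZ⁆ = (2 * I) • PauliX := by
  ext a b; fin_cases a <;> fin_cases b <;>
    simp [Ring.lie_def, PauliX, PauliY, PauliZ] <;> ring

lemma lie_PauliZ_PauliX : ⁅PauliZ, PauliX⁆ = (2 * I) • PauliY := by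
  ext a b; fin_cases a <;> fin_cases b <;>
    simp [Ring.lie_def, PauliX, PauliY, PauliZ] <;> ring_nf <;> simp

lemma lie_PauliY_PauliX : ⁅PauliY, PauliX⁆ = (-2 * I) • PauliZ := by
  rw [← lie_skew, lie_PauliX_PauliY, neg_mul, neg_smul]

lemma lie_PauliZ_PauliY : ⁅PauliZ, PauliY⁆ = (-2 * I) • PauliX := by
  rw [← lie_skew, lie_PauliY_PauliZ, neg_mul, neg_smul]

lemma lie_PauliX_PauliZ : ⁅PauliX, PauliZ⁆ = (-2 * I) • PauliY := by
  rw [← lie_skew, lie_PauliZ_PauliX, neg_mul, neg_smul]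

section PauliString

variable {n : ℕ}

lemma pauliString_mul (A B : Fin n → M₂) :
    pauliString A * pauliString B = pauliString (fun k => A k * B k) := by
  ext x y
  simp only [pauliString, Matrix.mul_apply, Matrix.of_apply, Finset.prod_univ_sum]
  simp [Fintype.piFinset_univ, ← Finset.prod_mul_distrib]

lemma prod_erase_congr_of_eq_off {A B : Fin n → M₂} {i : Fin n} (hne : ∀ k ≠ i, A k = B k)
    (x y : Fin n → Fin 2) :
    ∏ k ∈ Finset.univ.erase i, A k (x k) (y k) = ∏ k ∈ Finset.univ.erase i, B k (x k) (y k) :=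
  Finset.prod_congr rfl fun k hk => by rw [hne k (Finset.ne_of_mem_erase hk)]

lemma pauliString_eq_smul_of_eq_off {A B : Fin n → M₂} {i : Fin n} {c : ℂ}
    (hi : A i = c • B i) (hne : ∀ k ≠ i, A k = B k) :
    pauliString A = c • pauliString B := by
  ext x y
  simp only [pauliString, Matrix.of_apply, Matrix.smul_apply, smul_eq_mul,
    ← Finset.mul_prod_erase _ _ (Finset.mem_univ i), prod_erase_congr_of_eq_off hne, hi]
  ring

lemma pauliString_eq_sub_of_eq_off {A B C : Fin n → M₂} {i : Fin n}
    (hi : A i = B i - C i) (hB : ∀ k ≠ i, A k = B k) (hC : ∀ k ≠ i, A k = C k) :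
    pauliString A = pauliString B - pauliString C := by
  ext x y
  simp only [pauliString, Matrix.of_apply, Matrix.sub_apply,
    ← Finset.mul_prod_erase _ _ (Finset.mem_univ i), ← prod_erase_congr_of_eq_off hB,
    ← prod_erase_congr_of_eq_off hC, hi]
  ring

end PauliString

def threeLocal {n : ℕ} (A B C : M₂) (i j l : Fin n) :
    Matrix (Fin n → Fin 2) (Fin n → Fin 2) ℂ :=
  pauliString fun k => if k = i then A else if k = j then B else if k = l then C else PauliI

section LocalStrings

variable {n : ℕ} {i j l : Fin n}

lemma threeLocal_mul (A B C A' B' C' : M₂) :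
    threeLocal A B C i j l * threeLocal A' B' C' i j l
      = threeLocal (A * A') (B * B') (C * C') i j l := by
  rw [threeLocal, threeLocal, threeLocal, pauliString_mul]
  exact congrArg pauliString (funext fun k => by split_ifs <;> simp [PauliI])

lemma twoLocal_eq_threeLocal_left (A B : M₂) :
    twoLocal A B i j = threeLocal A B PauliI i j l := by
  rw [twoLocal, threeLocal]
  exact congrArg pauliString (funext fun k => by split_ifs <;> rfl)

lemma twoLocal_eq_threeLocal_right (hji : j ≠ i) (hli : l ≠ i) (B C : M₂) :
    twoLocal B C j l = threeLocal PauliI B C i j l := by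
  rw [twoLocal, threeLocal]
  refine congrArg pauliString (funext fun k => ?_)
  by_cases hk : k = i
  · subst hk; simp [hji.symm, hli.symm]
  · simp [hk]

lemma twoLocal_eq_threeLocal_outer (hji : j ≠ i) (hjl : j ≠ l) (A C : M₂) :
    twoLocal A C i l = threeLocal A PauliI C i j l := by
  rw [twoLocal, threeLocal]
  refine congrArg pauliString (funext fun k => ?_)
  by_cases hk : k = j
  · subst hk; simp [hji, hjl]
  · simp [hk]

lemma threeLocal_smul_middle (hji : j ≠ i) (A B C : M₂) (c : ℂ) :
    threeLocal A (c • B) C i j l = c • threeLocal A B C i j l :=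
  pauliString_eq_smul_of_eq_off (i := j) (by simp [hji]) fun k hk => by simp [hk]

lemma threeLocal_smul_right (hli : l ≠ i) (hlj : l ≠ j) (A B C : M₂) (c : ℂ) :
    threeLocal A B (c • C) i j l = c • threeLocal A B C i j l :=
  pauliString_eq_smul_of_eq_off (i := l) (by simp [hli, hlj]) fun k hk => by simp [hk]

lemma threeLocal_sub_middle (hji : j ≠ i) (A B B' C : M₂) :
    threeLocal A (B - B') C i j l = threeLocal A B C i j l - threeLocal A B' C i j l :=
  pauliString_eq_sub_of_eq_off (i := j) (by simp [hji]) (fun k hk => by simp [hk])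
    fun k hk => by simp [hk]

lemma threeLocal_sub_right (hli : l ≠ i) (hlj : l ≠ j) (A B C C' : M₂) :
    threeLocal A B (C - C') i j l = threeLocal A B C i j l - threeLocal A B C' i j l :=
  pauliString_eq_sub_of_eq_off (i := l) (by simp [hli, hlj]) (fun k hk => by simp [hk])
    fun k hk => by simp [hk]

lemma twoLocal_comm (hij : i ≠ j) (A B : M₂) : twoLocal A B i j = twoLocal B A j i := by
  rw [twoLocal, twoLocal]
  refine congrArg pauliString (funext fun k => ?_)
  by_cases hk : k = i
  · subst hk; simp [hij]
  · simp [hk]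

end LocalStrings

section NestedBracket

variable {n : ℕ} {i j l : Fin n} {A B C D E D' C' W : M₂} {s t : ℂ}

lemma lie_smul_twoLocal_smul_twoLocal (hij : i ≠ j) (hil : i ≠ l)
    (hBC : ⁅B, C⁆ = (s * I) • E) :
    ⁅I • twoLocal A B i j, I • twoLocal C D j l⁆ = (-s * I) • threeLocal A E D i j l := by
  rw [twoLocal_eq_threeLocal_left, twoLocal_eq_threeLocal_right hij.symm hil.symm,
    lie_smul, smul_lie, Ring.lie_def, threeLocal_mul, threeLocal_mul]
  simp only [mul_PauliI, PauliI_mul]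
  rw [← threeLocal_sub_middle hij.symm, ← Ring.lie_def, hBC,
    threeLocal_smul_middle hij.symm, smul_smul, smul_smul]
  congr 1
  linear_combination (s * I) * Complex.I_mul_I

lemma lie_lie_twoLocal_right (hij : i ≠ j) (hjl : j ≠ l) (hil : i ≠ l)
    (hBC : ⁅B, C⁆ = (s * I) • E) (hEE : E * E = PauliI) (hDD' : ⁅D, D'⁆ = (t * I) • W) :
    ⁅⁅I • twoLocal A B i j, I • twoLocal C D j l⁆, I • twoLocal E D' j l⁆
      = (s * t) • I • twoLocal A W i l := by
  rw [lie_smul_twoLocal_smul_twoLocal hij hil hBC,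
    twoLocal_eq_threeLocal_right hij.symm hil.symm, twoLocal_eq_threeLocal_outer hij.symm hjl,
    lie_smul, smul_lie, Ring.lie_def, threeLocal_mul, threeLocal_mul]
  simp only [mul_PauliI, PauliI_mul, hEE]
  rw [← threeLocal_sub_right hil.symm hjl.symm, ← Ring.lie_def, hDD',
    threeLocal_smul_right hil.symm hjl.symm, smul_smul, smul_smul, smul_smul]
  congr 1
  linear_combination (-s * t * I) * Complex.I_mul_I

lemma lie_lie_twoLocal_middle (hij : i ≠ j) (hil : i ≠ l)
    (hBC : ⁅B, C⁆ = (s * I) • E) (hEC' : ⁅E, C'⁆ = (t * I) • W) (hDD : D * D = PauliI) :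
    ⁅⁅I • twoLocal A B i j, I • twoLocal C D j l⁆, I • twoLocal C' D j l⁆
      = (s * t) • I • twoLocal A W i j := by
  rw [lie_smul_twoLocal_smul_twoLocal hij hil hBC,
    twoLocal_eq_threeLocal_right hij.symm hil.symm, twoLocal_eq_threeLocal_left (l := l),
    lie_smul, smul_lie, Ring.lie_def, threeLocal_mul, threeLocal_mul]
  simp only [mul_PauliI, PauliI_mul, hDD]
  rw [← threeLocal_sub_middle hij.symm, ← Ring.lie_def, hEC',
    threeLocal_smul_middle hij.symm, smul_smul, smul_smul, smul_smul]
  congr 1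
  linear_combination (-s * t * I) * Complex.I_mul_I

end NestedBracket

lemma swap_mem_genSet {k : ℕ} {A B : M₂} (h : (A, B) ∈ genSet k) : (B, A) ∈ genSet k := by
  unfold genSet at h ⊢
  split <;> simp_all <;> tauto

section Generators

variable {n : ℕ} (K : LieSubalgebra ℝ (Matrix (Fin n → Fin 2) (Fin n → Fin 2) ℂ))
  {i j : Fin n}

def ContainsEdgeGenerators (k : ℕ) (i j : Fin n) : Prop :=
  ∀ A B, (A, B) ∈ genSet k → I • twoLocal A B i j ∈ K

variable {K}

lemma ContainsEdgeGenerators.symm {k : ℕ} (hij : i ≠ j) (h : ContainsEdgeGenerators K k i j) :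
    ContainsEdgeGenerators K k j i := fun A B hAB => by
  rw [← twoLocal_comm hij]; exact h B A (swap_mem_genSet hAB)

lemma containsEdgeGenerators_seven_iff : ContainsEdgeGenerators K 7 i j ↔
    I • twoLocal PauliX PauliX i j ∈ K ∧ I • twoLocal PauliY PauliY i j ∈ K ∧
      I • twoLocal PauliZ PauliZ i j ∈ K := by
  simp [ContainsEdgeGenerators, genSet, or_imp, forall_and]

lemma containsEdgeGenerators_sixteen_iff : ContainsEdgeGenerators K 16 i j ↔
    I • twoLocal PauliX PauliY i j ∈ K ∧ I • twoLocal PauliY PauliX i j ∈ K ∧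
      I • twoLocal PauliY PauliZ i j ∈ K ∧ I • twoLocal PauliZ PauliY i j ∈ K := by
  simp [ContainsEdgeGenerators, genSet, or_imp, forall_and]

lemma containsEdgeGenerators_twenty_iff : ContainsEdgeGenerators K 20 i j ↔
    I • twoLocal PauliX PauliX i j ∈ K ∧ I • twoLocal PauliY PauliY i j ∈ K ∧
      I • twoLocal PauliY PauliZ i j ∈ K ∧ I • twoLocal PauliZ PauliY i j ∈ K := by
  simp [ContainsEdgeGenerators, genSet, or_imp, forall_and]

lemma containsEdgeGenerators_twentyTwo_iff : ContainsEdgeGenerators K 22 i j ↔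
    I • twoLocal PauliX PauliX i j ∈ K ∧ I • twoLocal PauliX PauliY i j ∈ K ∧
      I • twoLocal PauliY PauliX i j ∈ K ∧ I • twoLocal PauliX PauliZ i j ∈ K ∧
      I • twoLocal PauliZ PauliX i j ∈ K := by
  simp [ContainsEdgeGenerators, genSet, or_imp, forall_and]

lemma dla_le_iff {k : ℕ} {G : SimpleGraph (Fin n)} :
    dla k G ≤ K ↔ ∀ ⦃i j⦄, G.Adj i j → ContainsEdgeGenerators K k i j := by
  rw [dla, LieSubalgebra.lieSpan_le]
  constructor
  · exact fun h i j hij A B hAB => h ⟨i, j, hij, (A, B), hAB, rfl⟩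
  · rintro h _ ⟨i, j, hij, p, hp, rfl⟩
    exact h hij p.1 p.2 hp

lemma dla_mono {k : ℕ} {G H : SimpleGraph (Fin n)} (h : G ≤ H) : dla k G ≤ dla k H :=
  dla_le_iff.2 fun _ _ hij => dla_le_iff.1 le_rfl (h hij)

end Generators

section Transitivity

variable {n : ℕ} {K : LieSubalgebra ℝ (Matrix (Fin n → Fin 2) (Fin n → Fin 2) ℂ)}
  {i j l : Fin n} {A B C D E C' D' W : M₂} {s t : ℂ}

lemma smul_twoLocal_mem_of_lie_lie_right (hij : i ≠ j) (hjl : j ≠ l) (hil : i ≠ l)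
    (hBC : ⁅B, C⁆ = (s * I) • E) (hEE : E * E = PauliI) (hDD' : ⁅D, D'⁆ = (t * I) • W)
    (r : ℝ) (hst : s * t = r) (hr : r ≠ 0) (hAB : I • twoLocal A B i j ∈ K)
    (hCD : I • twoLocal C D j l ∈ K) (hED' : I • twoLocal E D' j l ∈ K) :
    I • twoLocal A W i l ∈ K := by
  have h := K.lie_mem (K.lie_mem hAB hCD) hED'
  rw [lie_lie_twoLocal_right hij hjl hil hBC hEE hDD', hst] at h
  exact (K.ofReal_smul_mem_iff hr).1 h

lemma smul_twoLocal_mem_of_lie_lie_middle (hij : i ≠ j) (hil : i ≠ l)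
    (hBC : ⁅B, C⁆ = (s * I) • E) (hEC' : ⁅E, C'⁆ = (t * I) • W) (hDD : D * D = PauliI)
    (r : ℝ) (hst : s * t = r) (hr : r ≠ 0) (hAB : I • twoLocal A B i j ∈ K)
    (hCD : I • twoLocal C D j l ∈ K) (hC'D : I • twoLocal C' D j l ∈ K) :
    I • twoLocal A W i j ∈ K := by
  have h := K.lie_mem (K.lie_mem hAB hCD) hC'D
  rw [lie_lie_twoLocal_middle hij hil hBC hEC' hDD, hst] at h
  exact (K.ofReal_smul_mem_iff hr).1 h

lemma ContainsEdgeGenerators.trans_seven (hij : i ≠ j) (hjl : j ≠ l) (hil : i ≠ l)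
    (h₁ : ContainsEdgeGenerators K 7 i j) (h₂ : ContainsEdgeGenerators K 7 j l) :
    ContainsEdgeGenerators K 7 i l := by
  obtain ⟨xx_ij, yy_ij, zz_ij⟩ := containsEdgeGenerators_seven_iff.1 h₁
  obtain ⟨xx_jl, yy_jl, zz_jl⟩ := containsEdgeGenerators_seven_iff.1 h₂
  refine containsEdgeGenerators_seven_iff.2 ⟨?_, ?_, ?_⟩
  · exact smul_twoLocal_mem_of_lie_lie_right hij hjl hil lie_PauliX_PauliY PauliZ_mul_self
      lie_PauliY_PauliZ 4 (by norm_num) (by norm_num) xx_ij yy_jl zz_jl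
  · exact smul_twoLocal_mem_of_lie_lie_right hij hjl hil lie_PauliY_PauliX PauliZ_mul_self
      lie_PauliX_PauliZ 4 (by norm_num) (by norm_num) yy_ij xx_jl zz_jl
  · exact smul_twoLocal_mem_of_lie_lie_right hij hjl hil lie_PauliZ_PauliX PauliY_mul_self
      lie_PauliX_PauliY 4 (by norm_num) (by norm_num) zz_ij xx_jl yy_jl

lemma ContainsEdgeGenerators.trans_sixteen (hij : i ≠ j) (hjl : j ≠ l) (hil : i ≠ l)
    (h₁ : ContainsEdgeGenerators K 16 i j) (h₂ : ContainsEdgeGenerators K 16 j l) :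
    ContainsEdgeGenerators K 16 i l := by
  obtain ⟨-, yx_ij, -, -⟩ := containsEdgeGenerators_sixteen_iff.1 h₁
  obtain ⟨-, yx_jl, yz_jl, zy_jl⟩ := containsEdgeGenerators_sixteen_iff.1 h₂
  obtain ⟨-, yx_lj, -, -⟩ := containsEdgeGenerators_sixteen_iff.1 (h₂.symm hjl)
  obtain ⟨-, yx_ji, yz_ji, zy_ji⟩ := containsEdgeGenerators_sixteen_iff.1 (h₁.symm hij)
  refine containsEdgeGenerators_sixteen_iff.2 ⟨?_, ?_, ?_, ?_⟩
  · rw [twoLocal_comm hil]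
    exact smul_twoLocal_mem_of_lie_lie_right hjl.symm hij.symm hil.symm lie_PauliX_PauliY
      PauliZ_mul_self lie_PauliZ_PauliY (-4) (by norm_num) (by norm_num) yx_lj yz_ji zy_ji
  · exact smul_twoLocal_mem_of_lie_lie_right hij hjl hil lie_PauliX_PauliY PauliZ_mul_self
      lie_PauliZ_PauliY (-4) (by norm_num) (by norm_num) yx_ij yz_jl zy_jl
  · exact smul_twoLocal_mem_of_lie_lie_right hij hjl hil lie_PauliX_PauliY PauliZ_mul_self
      lie_PauliX_PauliY 4 (by norm_num) (by norm_num) yx_ij yx_jl zy_jl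
  · rw [twoLocal_comm hil]
    exact smul_twoLocal_mem_of_lie_lie_right hjl.symm hij.symm hil.symm lie_PauliX_PauliY
      PauliZ_mul_self lie_PauliX_PauliY 4 (by norm_num) (by norm_num) yx_lj yx_ji zy_ji

lemma ContainsEdgeGenerators.trans_twenty (hij : i ≠ j) (hjl : j ≠ l) (hil : i ≠ l)
    (h₁ : ContainsEdgeGenerators K 20 i j) (h₂ : ContainsEdgeGenerators K 20 j l) :
    ContainsEdgeGenerators K 20 i l := by
  obtain ⟨xx_ij, yy_ij, yz_ij, -⟩ := containsEdgeGenerators_twenty_iff.1 h₁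
  obtain ⟨xx_jl, -, yz_jl, zy_jl⟩ := containsEdgeGenerators_twenty_iff.1 h₂
  obtain ⟨-, yy_lj, -, -⟩ := containsEdgeGenerators_twenty_iff.1 (h₂.symm hjl)
  obtain ⟨xx_ji, -, -, zy_ji⟩ := containsEdgeGenerators_twenty_iff.1 (h₁.symm hij)
  refine containsEdgeGenerators_twenty_iff.2 ⟨?_, ?_, ?_, ?_⟩
  · exact smul_twoLocal_mem_of_lie_lie_right hij hjl hil lie_PauliX_PauliY PauliZ_mul_self
      lie_PauliZ_PauliY (-4) (by norm_num) (by norm_num) xx_ij yz_jl zy_jl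
  · exact smul_twoLocal_mem_of_lie_lie_right hij hjl hil lie_PauliZ_PauliX PauliY_mul_self
      lie_PauliX_PauliZ (-4) (by norm_num) (by norm_num) yz_ij xx_jl yz_jl
  · exact smul_twoLocal_mem_of_lie_lie_right hij hjl hil lie_PauliY_PauliX PauliZ_mul_self
      lie_PauliX_PauliY (-4) (by norm_num) (by norm_num) yy_ij xx_jl zy_jl
  · rw [twoLocal_comm hil]
    exact smul_twoLocal_mem_of_lie_lie_right hjl.symm hij.symm hil.symm lie_PauliY_PauliX
      PauliZ_mul_self lie_PauliX_PauliY (-4) (by norm_num) (by norm_num) yy_lj xx_ji zy_ji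

lemma ContainsEdgeGenerators.trans_twentyTwo (hij : i ≠ j) (hjl : j ≠ l) (hil : i ≠ l)
    (h₁ : ContainsEdgeGenerators K 22 i j) (h₂ : ContainsEdgeGenerators K 22 j l) :
    ContainsEdgeGenerators K 22 i l := by
  obtain ⟨-, xy_ij, -, -, -⟩ := containsEdgeGenerators_twentyTwo_iff.1 h₁
  obtain ⟨-, xy_jl, -, xz_jl, zx_jl⟩ := containsEdgeGenerators_twentyTwo_iff.1 h₂
  obtain ⟨xx_lj, xy_lj, yx_lj, -, -⟩ := containsEdgeGenerators_twentyTwo_iff.1 (h₂.symm hjl)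
  obtain ⟨-, xy_ji, -, xz_ji, zx_ji⟩ := containsEdgeGenerators_twentyTwo_iff.1 (h₁.symm hij)
  have xy_il : I • twoLocal PauliX PauliY i l ∈ K :=
    smul_twoLocal_mem_of_lie_lie_right hij hjl hil lie_PauliY_PauliX PauliZ_mul_self
      lie_PauliZ_PauliX (-4) (by norm_num) (by norm_num) xy_ij xz_jl zx_jl
  refine containsEdgeGenerators_twentyTwo_iff.2 ⟨?_, xy_il, ?_, ?_, ?_⟩
  · exact smul_twoLocal_mem_of_lie_lie_middle hil hij lie_PauliY_PauliX lie_PauliZ_PauliY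
      PauliX_mul_self 4 (by norm_num) (by norm_num) xy_il xx_lj yx_lj
  · rw [twoLocal_comm hil]
    exact smul_twoLocal_mem_of_lie_lie_right hjl.symm hij.symm hil.symm lie_PauliY_PauliX
      PauliZ_mul_self lie_PauliZ_PauliX (-4) (by norm_num) (by norm_num) xy_lj xz_ji zx_ji
  · exact smul_twoLocal_mem_of_lie_lie_right hij hjl hil lie_PauliY_PauliX PauliZ_mul_self
      lie_PauliY_PauliX 4 (by norm_num) (by norm_num) xy_ij xy_jl zx_jl
  · rw [twoLocal_comm hil]
    exact smul_twoLocal_mem_of_lie_lie_right hjl.symm hij.symm hil.symm lie_PauliY_PauliX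
      PauliZ_mul_self lie_PauliY_PauliX 4 (by norm_num) (by norm_num) xy_lj xy_ji zx_ji

lemma ContainsEdgeGenerators.trans {k : ℕ} (hk : k ∈ ({7, 16, 20, 22} : Set ℕ))
    (hij : i ≠ j) (hjl : j ≠ l) (hil : i ≠ l)
    (h₁ : ContainsEdgeGenerators K k i j) (h₂ : ContainsEdgeGenerators K k j l) :
    ContainsEdgeGenerators K k i l := by
  rcases hk with rfl | rfl | rfl | rfl
  exacts [h₁.trans_seven hij hjl hil h₂, h₁.trans_sixteen hij hjl hil h₂,
    h₁.trans_twenty hij hjl hil h₂, h₁.trans_twentyTwo hij hjl hil h₂]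

end Transitivity

theorem dla_eq_dla_completeGraph_of_connected_general
    (n : ℕ) (G : SimpleGraph (Fin n)) (hconn : G.Connected)
    (k : ℕ) (hk : k ∈ ({7, 16, 20, 22} : Set ℕ)) :
    dla k G = dla k (⊤ : SimpleGraph (Fin n)) := by
  refine le_antisymm (dla_mono le_top) (dla_le_iff.2 fun i j hij => ?_)
  exact (hconn.preconnected i j).rel_of_ne (dla_le_iff.1 le_rfl)
    (fun _ _ _ hab hbc hac => ContainsEdgeGenerators.trans hk hab hbc hac) hij.ne

/-- For every `k ∈ {7, 16, 20, 22}` and every connected simple graph `G` on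
`{1, …, n}` with `n ≥ 3`, the dynamical Lie algebras of `G` and of the complete graph `K_n`
coincide: `𝔞_k^G = 𝔞_k^{K_n}`. -/
theorem dla_eq_dla_completeGraph_of_connected
    (n : ℕ) (hn : 3 ≤ n) (G : SimpleGraph (Fin n)) (hconn : G.Connected)
    (k : ℕ) (hk : k ∈ ({7, 16, 20, 22} : Set ℕ)) :
    dla k G = dla k (⊤ : SimpleGraph (Fin n)) :=
  dla_eq_dla_completeGraph_of_connected_general n G hconn k hk
end
end

section
/- Let V₁ ⊆ {1,…,n} and let G₁ ⊆ G₂ and G₁' ⊆ G₂' be simple graphs on the vertex set {1,…,n} such that: every edge of G₁ and of G₁' has both endpoints in V₁; the edges of G₂ with both endpoints in V₁ are exactly the edges of G₁; the edges of G₂' with both endpoints in V₁ are exactly the edges of G₁'; and the edges of G₂ having at least one endpoint outside V₁ coincide with the edges of G₂' having at least one endpoint outside V₁. Then for any k ∈ {2,4,6,7,14,16,20,22}, if 𝔞_k^{G₁} = 𝔞_k^{G₁'} then 𝔞_k^{G₂} = 𝔞_k^{G₂'}. -/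
/-!
The generators of `𝔞_k^G` are indexed by the edges of `G`, so `𝔞_k^{G ⊔ H} = 𝔞_k^G ⊔ 𝔞_k^H`.
Write `G₂ = G₁ ⊔ (G₂ \ G₁)`: the added edges `G₂ \ G₁` are exactly the edges of `G₂` leaving
`V₁`, and likewise for `G₂'`, so both sides share the summand `𝔞_k^{G₂ \ G₁} = 𝔞_k^{G₂' \ G₁'}`.
-/

open Matrix DirectSum

noncomputable section

attribute [local instance] LieRing.ofAssociativeRing

namespace SimpleGraph

variable {α : Type*} {V : Set α} {G H : SimpleGraph α}

lemma sdiff_adj_iff_adj_and_notMem (hH : ∀ i j, H.Adj i j → i ∈ V ∧ j ∈ V)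
    (hGH : ∀ i j, i ∈ V → j ∈ V → (G.Adj i j ↔ H.Adj i j)) (i j : α) :
    (G \ H).Adj i j ↔ G.Adj i j ∧ (i ∉ V ∨ j ∉ V) := by
  rw [sdiff_adj]
  by_cases hij : i ∈ V ∧ j ∈ V
  · simp [hij, hGH i j hij.1 hij.2]
  · have hH_ij : ¬H.Adj i j := fun h => hij (hH i j h)
    simp only [hH_ij, not_false_eq_true, and_true]
    tauto

end SimpleGraph

def dlaGenerators (k : ℕ) {n : ℕ} (G : SimpleGraph (Fin n)) :
    Set (Matrix (Fin n → Fin 2) (Fin n → Fin 2) ℂ) :=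
  {M | ∃ i j : Fin n, G.Adj i j ∧ ∃ p ∈ genSet k, M = Complex.I • twoLocal p.1 p.2 i j}

lemma dla_eq_lieSpan (k : ℕ) {n : ℕ} (G : SimpleGraph (Fin n)) :
    dla k G = LieSubalgebra.lieSpan ℝ _ (dlaGenerators k G) :=
  rfl

lemma dlaGenerators_sup (k : ℕ) {n : ℕ} (G H : SimpleGraph (Fin n)) :
    dlaGenerators k (G ⊔ H) = dlaGenerators k G ∪ dlaGenerators k H := by
  ext M
  simp only [dlaGenerators, Set.mem_ofPred_eq, Set.mem_union, SimpleGraph.sup_adj]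
  constructor
  · rintro ⟨i, j, hG | hH, hM⟩
    exacts [Or.inl ⟨i, j, hG, hM⟩, Or.inr ⟨i, j, hH, hM⟩]
  · rintro (⟨i, j, hG, hM⟩ | ⟨i, j, hH, hM⟩)
    exacts [⟨i, j, Or.inl hG, hM⟩, ⟨i, j, Or.inr hH, hM⟩]

lemma dla_sup (k : ℕ) {n : ℕ} (G H : SimpleGraph (Fin n)) :
    dla k (G ⊔ H) = dla k G ⊔ dla k H := by
  rw [dla_eq_lieSpan, dlaGenerators_sup, LieSubalgebra.span_union]
  rfl

theorem dla_eq_of_local_eq_general (n : ℕ) (V₁ : Set (Fin n))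
    (G₁ G₂ G₁' G₂' : SimpleGraph (Fin n))
    (hsub : G₁ ≤ G₂) (hsub' : G₁' ≤ G₂')
    (hG₁ : ∀ i j, G₁.Adj i j → i ∈ V₁ ∧ j ∈ V₁)
    (hG₁' : ∀ i j, G₁'.Adj i j → i ∈ V₁ ∧ j ∈ V₁)
    (hin : ∀ i j, i ∈ V₁ → j ∈ V₁ → (G₂.Adj i j ↔ G₁.Adj i j))
    (hin' : ∀ i j, i ∈ V₁ → j ∈ V₁ → (G₂'.Adj i j ↔ G₁'.Adj i j))
    (hout : ∀ i j, i ∉ V₁ ∨ j ∉ V₁ → (G₂.Adj i j ↔ G₂'.Adj i j))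
    (k : ℕ)
    (h : dla k G₁ = dla k G₁') :
    dla k G₂ = dla k G₂' := by
  have hdiff : G₂ \ G₁ = G₂' \ G₁' := by
    ext i j
    rw [SimpleGraph.sdiff_adj_iff_adj_and_notMem hG₁ hin,
      SimpleGraph.sdiff_adj_iff_adj_and_notMem hG₁' hin']
    exact ⟨fun ⟨hij, hV⟩ => ⟨(hout i j hV).mp hij, hV⟩,
      fun ⟨hij, hV⟩ => ⟨(hout i j hV).mpr hij, hV⟩⟩
  calc dla k G₂ = dla k (G₁ ⊔ G₂ \ G₁) := by rw [sup_sdiff_cancel_right hsub]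
    _ = dla k (G₁' ⊔ G₂' \ G₁') := by rw [dla_sup, dla_sup, h, hdiff]
    _ = dla k G₂' := by rw [sup_sdiff_cancel_right hsub']

/-- Locality of `k`-equivalence: if the subgraphs `G₁ ⊆ G₂` and `G₁' ⊆ G₂'`
agree outside `V₁`, are the respective restrictions of `G₂`, `G₂'` to `V₁`, and
`𝔞_k^{G₁} = 𝔞_k^{G₁'}`, then `𝔞_k^{G₂} = 𝔞_k^{G₂'}`. -/
theorem dla_eq_of_local_eq (n : ℕ) (V₁ : Set (Fin n))
    (G₁ G₂ G₁' G₂' : SimpleGraph (Fin n))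
    (hsub : G₁ ≤ G₂) (hsub' : G₁' ≤ G₂')
    (hG₁ : ∀ i j, G₁.Adj i j → i ∈ V₁ ∧ j ∈ V₁)
    (hG₁' : ∀ i j, G₁'.Adj i j → i ∈ V₁ ∧ j ∈ V₁)
    (hin : ∀ i j, i ∈ V₁ → j ∈ V₁ → (G₂.Adj i j ↔ G₁.Adj i j))
    (hin' : ∀ i j, i ∈ V₁ → j ∈ V₁ → (G₂'.Adj i j ↔ G₁'.Adj i j))
    (hout : ∀ i j, i ∉ V₁ ∨ j ∉ V₁ → (G₂.Adj i j ↔ G₂'.Adj i j))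
    (k : ℕ) (hk : k ∈ ({2, 4, 6, 7, 14, 16, 20, 22} : Set ℕ))
    (h : dla k G₁ = dla k G₁') :
    dla k G₂ = dla k G₂' :=
  dla_eq_of_local_eq_general n V₁ G₁ G₂ G₁' G₂' hsub hsub' hG₁ hG₁' hin hin' hout k h
end
end

section
/- Let G be a connected bipartite simple graph with bipartition classes U and V satisfying |U| > 1 and |V| > 1, and suppose G has at least one vertex of degree > 2. Then G contains Σ as a subgraph: there exists an injective map f from {1,2,3,4,5} into the vertices of G such that {f(1),f(2)}, {f(2),f(3)}, {f(3),f(4)}, and {f(2),f(5)} are all edges of G. -/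
/-!
Take `v` of degree at least `3`. Some `u ≠ v` lies in the class of `v`, so `u` is not adjacent
to `v`, and a path from `v` to `u` starts `v - x - y` with `y ≠ v`. Bipartite graphs are
triangle-free, so `y` differs from two further neighbours `a, b` of `v`, and the path
`a - v - x - y` together with the edge `v - b` is a copy of `Σ`.
-/

namespace SimpleGraph

variable {V : Type*} {G : SimpleGraph V} {u v x y : V}

theorem Reachable.exists_adj_adj_ne (h : G.Reachable v u) (hne : v ≠ u) (hadj : ¬G.Adj v u) :
    ∃ x y, G.Adj v x ∧ G.Adj x y ∧ y ≠ v := by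
  classical
  obtain ⟨p, hp⟩ := h.some.toPath
  cases p with
  | nil => exact absurd rfl hne
  | cons hvx q =>
    cases q with
    | nil => exact absurd hvx hadj
    | cons hxy r =>
      refine ⟨_, _, hvx, hxy, fun hyv => ?_⟩
      rw [Walk.cons_isPath_iff] at hp
      exact hp.2 (by simp [← hyv])

theorem IsBipartiteWith.exists_ne_not_adj {s t : Set V} (h : G.IsBipartiteWith s t) (hv : v ∈ s)
    (hs : 1 < s.ncard) : ∃ u, u ≠ v ∧ ¬G.Adj v u := by
  obtain ⟨u, hu, huv⟩ := Set.exists_ne_of_one_lt_ncard hs v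
  exact ⟨u, huv, fun hvu => Set.disjoint_left.mp h.disjoint hu (h.mem_of_mem_adj hv hvu)⟩

theorem CliqueFree.exists_sigma_of_adj_adj [Fintype (G.neighborSet v)] (hG : G.CliqueFree 3)
    (hv : 2 < G.degree v) (hvx : G.Adj v x) (hxy : G.Adj x y) (hyv : y ≠ v) :
    ∃ f : Fin 5 → V, Function.Injective f ∧
      G.Adj (f 0) (f 1) ∧ G.Adj (f 1) (f 2) ∧ G.Adj (f 2) (f 3) ∧ G.Adj (f 1) (f 4) := by
  classical
  have hcard : 1 < ((G.neighborFinset v).erase x).card := by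
    rw [Finset.card_erase_of_mem ((mem_neighborFinset _ _ _).mpr hvx),
      card_neighborFinset_eq_degree]
    omega
  obtain ⟨a, ha, b, hb, hab⟩ := Finset.one_lt_card.mp hcard
  simp only [Finset.mem_erase, mem_neighborFinset] at ha hb
  have hvx_ne := G.ne_of_adj hvx
  have hxy_ne := G.ne_of_adj hxy
  have hind := isIndepSet_neighborSet_of_triangleFree G hG v
  have hya : y ≠ a := fun hya => hind hvx (hya ▸ ha.2) hxy_ne (hya ▸ hxy)
  have hyb : y ≠ b := fun hyb => hind hvx (hyb ▸ hb.2) hxy_ne (hyb ▸ hxy)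
  have hva_ne := G.ne_of_adj ha.2
  have hvb_ne := G.ne_of_adj hb.2
  refine ⟨![a, v, x, y, b], ?_, ha.2.symm, hvx, hxy, hb.2⟩
  intro i j hij
  fin_cases i <;> fin_cases j <;> simp_all [eq_comm]

end SimpleGraph

theorem sigma_subgraph_of_bipartite_general {α : Type} [Fintype α]
    (G : SimpleGraph α) [DecidableRel G.Adj]
    (U V : Set α) (hpart : ∀ a, a ∈ U ↔ a ∉ V)
    (hbip : ∀ a b, G.Adj a b → (a ∈ U ∧ b ∈ V) ∨ (a ∈ V ∧ b ∈ U))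
    (hU : 1 < U.ncard) (hV : 1 < V.ncard)
    (hconn : G.Connected) (hdeg : ∃ v, 2 < G.degree v) :
    ∃ f : Fin 5 → α, Function.Injective f ∧
      G.Adj (f 0) (f 1) ∧ G.Adj (f 1) (f 2) ∧ G.Adj (f 2) (f 3) ∧ G.Adj (f 1) (f 4) := by
  obtain ⟨v, hv⟩ := hdeg
  have hB : G.IsBipartiteWith U V :=
    ⟨Set.disjoint_left.mpr fun a ha => (hpart a).mp ha, fun a b hab => hbip a b hab⟩
  obtain ⟨u, huv, hvu⟩ : ∃ u, u ≠ v ∧ ¬G.Adj v u := by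
    by_cases hvU : v ∈ U
    · exact hB.exists_ne_not_adj hvU hU
    · exact hB.symm.exists_ne_not_adj (not_not.mp ((hpart v).not.mp hvU)) hV
  obtain ⟨x, y, hvx, hxy, hyv⟩ := (hconn.preconnected v u).exists_adj_adj_ne huv.symm hvu
  exact (hB.isBipartite.cliqueFree (by norm_num)).exists_sigma_of_adj_adj hv hvx hxy hyv

/-- A connected bipartite simple graph with bipartition classes `U`, `V` of
sizes `> 1` and with a vertex of degree `> 2` contains the graph `Σ` as a subgraph, i.e., there
is an injective map `f` of the vertices `{1, …, 5}` of `Σ` into the vertices of `G` carrying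
the edges `{1,2}, {2,3}, {3,4}, {2,5}` of `Σ` to edges of `G`. -/
theorem sigma_subgraph_of_bipartite {α : Type} [Fintype α] [DecidableEq α]
    (G : SimpleGraph α) [DecidableRel G.Adj]
    (U V : Set α) (hpart : ∀ a, a ∈ U ↔ a ∉ V)
    (hbip : ∀ a b, G.Adj a b → (a ∈ U ∧ b ∈ V) ∨ (a ∈ V ∧ b ∈ U))
    (hU : 1 < U.ncard) (hV : 1 < V.ncard)
    (hconn : G.Connected) (hdeg : ∃ v, 2 < G.degree v) :
    ∃ f : Fin 5 → α, Function.Injective f ∧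
      G.Adj (f 0) (f 1) ∧ G.Adj (f 1) (f 2) ∧ G.Adj (f 2) (f 3) ∧ G.Adj (f 1) (f 4) :=
  sigma_subgraph_of_bipartite_general G U V hpart hbip hU hV hconn hdeg
end
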